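/- arXiv:1604.01578 — 2 statements merged into one kernel-verified Lean document; each statement's English description precedes it below -/
import Mathlib

section
/- Let d ≥ 1 and let N : ℝ^d → ℝ be a seminorm taking integer values on ℤ^d. Then the unit ball {x ∈ ℝ^d : N(x) ≤ 1} is a polyhedron defined by finitely many integer inequalities: there exists a finite subset F ⊆ ℤ^d such that {x ∈ ℝ^d : N(x) ≤ 1} = {x ∈ ℝ^d : ⟨x, y⟩ ≤ 1 for all y ∈ F}. -/
/-!
For a sublinear `q` that is integral on a lattice `L` and for `e ∈ L`, the truncation
`x ↦ ⨅ t, q (x + t • e) - t * q e` is again sublinear, integral on `L` (the infimum is attained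
at an integer `t`) and below `q`, and it is linear along `e`. Truncating `N` along a lattice
point `m` and then along each coordinate vector yields an integral linear functional `⟪·, y⟫ ≤ N`
with `⟪m, y⟫ = N m`. Such `y` have coordinates bounded by `N (±eᵢ)`, so there are finitely many,
and `N` is their maximum at every rational point, hence everywhere by continuity.
-/

variable {V : Type*} [AddCommGroup V] [Module ℝ V]

structure IsSublinear (q : V → ℝ) : Prop where
  add_le : ∀ x y, q (x + y) ≤ q x + q y
  smul_eq : ∀ c : ℝ, 0 < c → ∀ x, q (c • x) = c * q x

namespace IsSublinear

variable {q p : V → ℝ}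

theorem map_zero (hq : IsSublinear q) : q 0 = 0 := by
  have h := hq.smul_eq 2 two_pos 0
  rw [smul_zero] at h
  linarith

theorem neg_apply_neg_le (hq : IsSublinear q) (x : V) : -q (-x) ≤ q x := by
  have h := hq.add_le x (-x)
  rw [add_neg_cancel, hq.map_zero] at h
  linarith

theorem mul_le_apply_smul (hq : IsSublinear q) (t : ℝ) (x : V) : t * q x ≤ q (t • x) := by
  rcases lt_trichotomy t 0 with ht | rfl | ht
  · have h := hq.neg_apply_neg_le (t • x)
    rwa [← neg_smul, hq.smul_eq (-t) (neg_pos.2 ht), neg_mul, neg_neg] at h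
  · simp [hq.map_zero]
  · exact (hq.smul_eq t ht x).ge

theorem apply_smul_of_neg_eq (hq : IsSublinear q) {e : V} (he : q (-e) = -q e) (t : ℝ) :
    q (t • e) = t * q e := by
  rcases lt_trichotomy t 0 with ht | rfl | ht
  · rw [← neg_smul_neg, hq.smul_eq _ (neg_pos.2 ht), he]
    ring
  · simp [hq.map_zero]
  · exact hq.smul_eq t ht e

theorem apply_add_smul_of_neg_eq (hq : IsSublinear q) {e : V} (he : q (-e) = -q e) (x : V)
    (t : ℝ) : q (x + t • e) = q x + t * q e := by
  have hle := hq.add_le (x + t • e) ((-t) • e)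
  rw [neg_smul, add_neg_cancel_right, ← neg_smul, hq.apply_smul_of_neg_eq he] at hle
  have hge := hq.add_le x (t • e)
  rw [hq.apply_smul_of_neg_eq he] at hge
  linarith

theorem neg_eq_of_mem_span (hq : IsSublinear q) {s : Set V} (hs : ∀ v ∈ s, q (-v) = -q v)
    {v : V} (hv : v ∈ Submodule.span ℝ s) : q (-v) = -q v := by
  induction hv using Submodule.span_induction with
  | mem v hv => exact hs v hv
  | zero => simp [hq.map_zero]
  | add u v _ _ hu hv =>
    have h₁ := hq.apply_add_smul_of_neg_eq hv u 1
    have h₂ := hq.apply_add_smul_of_neg_eq hv (-u) (-1)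
    rw [one_smul] at h₁
    rw [neg_one_smul, hu] at h₂
    rw [neg_add, h₁, h₂]
    ring
  | smul c v _ hv =>
    rw [← neg_smul, hq.apply_smul_of_neg_eq hv, hq.apply_smul_of_neg_eq hv]
    ring

theorem exists_linearMap_eq (hq : IsSublinear q) (h : ∀ v, q (-v) = -q v) :
    ∃ f : V →ₗ[ℝ] ℝ, ⇑f = q :=
  ⟨{ toFun := q
     map_add' := fun x y => by simpa using hq.apply_add_smul_of_neg_eq (h y) x 1
     map_smul' := fun c x => hq.apply_smul_of_neg_eq (h x) c }, rfl⟩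

theorem eq_of_le_of_neg_eq (hp : IsSublinear p) (hpq : ∀ x, p x ≤ q x) {e : V}
    (he : q (-e) = -q e) : p e = q e ∧ p (-e) = -q e := by
  have h₁ := hpq e
  have h₂ := hpq (-e)
  have h₃ := hp.neg_apply_neg_le e
  constructor <;> linarith

theorem bddBelow_range_apply_add_smul_sub (hq : IsSublinear q) (e x : V) :
    BddBelow (Set.range fun t : ℝ => q (x + t • e) - t * q e) := by
  refine ⟨-q (-x), ?_⟩
  rintro _ ⟨t, rfl⟩
  have h := hq.add_le (x + t • e) (-x)
  rw [add_neg_cancel_comm] at h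
  linarith [hq.mul_le_apply_smul t e]

theorem antitone_apply_add_smul_sub (hq : IsSublinear q) (e x : V) :
    Antitone fun t : ℝ => q (x + t • e) - t * q e := by
  intro t u htu
  have h := hq.add_le (x + t • e) ((u - t) • e)
  rw [add_assoc, ← add_smul, add_sub_cancel] at h
  rcases htu.lt_or_eq with htu | rfl
  · rw [hq.smul_eq _ (sub_pos.2 htu)] at h
    linarith
  · rfl

end IsSublinear

/-- For sublinear `q` this is the directional derivative of `q` at `e` in the direction `x`
(put `t = 1 / s` in `(q (e + s • x) - q e) / s`). -/
noncomputable def truncAlong (q : V → ℝ) (e x : V) : ℝ :=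
  ⨅ t : ℝ, (q (x + t • e) - t * q e)

namespace IsSublinear

variable {q : V → ℝ} {e : V} {L : AddSubgroup V}

theorem truncAlong_le (hq : IsSublinear q) (x : V) : truncAlong q e x ≤ q x :=
  (ciInf_le (hq.bddBelow_range_apply_add_smul_sub e x) 0).trans_eq (by simp)

theorem truncAlong_add_smul (hq : IsSublinear q) (x : V) (s : ℝ) :
    truncAlong q e (x + s • e) = truncAlong q e x + s * q e := by
  rw [truncAlong, truncAlong, ciInf_add (hq.bddBelow_range_apply_add_smul_sub e x)]
  conv_rhs => rw [← (Equiv.addRight s).iInf_comp]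
  congr 1 with t
  rw [Equiv.coe_addRight, add_smul, ← add_assoc, add_right_comm x]
  ring

theorem isSublinear_truncAlong (hq : IsSublinear q) : IsSublinear (truncAlong q e) where
  add_le x y := by
    refine le_ciInf_add_ciInf fun t s => ?_
    refine (ciInf_le (hq.bddBelow_range_apply_add_smul_sub e _) (t + s)).trans ?_
    have h := hq.add_le (x + t • e) (y + s • e)
    rw [add_add_add_comm, ← add_smul] at h
    linarith
  smul_eq c hc x := by
    rw [truncAlong, truncAlong, Real.mul_iInf_of_nonneg hc.le,
      ← (Equiv.mulLeft₀ c hc.ne').iInf_comp]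
    congr 1 with t
    simp only [Equiv.mulLeft₀_apply, mul_smul, ← smul_add, hq.smul_eq c hc]
    ring

theorem truncAlong_self (hq : IsSublinear q) :
    truncAlong q e e = q e ∧ truncAlong q e (-e) = -q e := by
  have h₁ := hq.truncAlong_add_smul (e := e) 0 1
  have h₂ := hq.truncAlong_add_smul (e := e) 0 (-1)
  rw [hq.isSublinear_truncAlong.map_zero, zero_add, one_smul] at h₁
  rw [hq.isSublinear_truncAlong.map_zero, zero_add, neg_one_smul] at h₂
  constructor <;> linarith

theorem truncAlong_int (hq : IsSublinear q) (hqL : ∀ x ∈ L, ∃ k : ℤ, q x = k) (he : e ∈ L) :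
    ∀ x ∈ L, ∃ k : ℤ, truncAlong q e x = k := by
  intro x hx
  set f : ℝ → ℝ := fun t => q (x + t • e) - t * q e
  have hint : ∀ j : ℤ, ∃ k : ℤ, f j = k := by
    intro j
    obtain ⟨a, ha⟩ := hqL _ (L.add_mem hx (L.zsmul_mem he j))
    obtain ⟨b, hb⟩ := hqL e he
    refine ⟨a - j * b, ?_⟩
    simp only [f, Int.cast_smul_eq_zsmul, ha, hb]
    push_cast
    ring
  obtain ⟨b, hb⟩ := hq.bddBelow_range_apply_add_smul_sub e x
  obtain ⟨k₀, ⟨j₀, hj₀⟩, hmin⟩ := Int.exists_least_of_bdd (P := fun k : ℤ => ∃ j : ℤ, f j = k)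
    ⟨⌈b⌉, fun k ⟨j, hj⟩ => Int.ceil_le.2 (hj ▸ hb ⟨j, rfl⟩)⟩ ⟨_, 0, (hint 0).choose_spec⟩
  refine ⟨k₀, le_antisymm (hj₀ ▸ ciInf_le ⟨b, hb⟩ _) (le_ciInf fun t => ?_)⟩
  -- the infimum over `t` is already reached at integers, because `f` is antitone
  obtain ⟨k, hk⟩ := hint ⌈t⌉
  calc (k₀ : ℝ) ≤ k := by exact_mod_cast hmin k ⟨_, hk⟩
    _ = f ⌈t⌉ := hk.symm
    _ ≤ f t := hq.antitone_apply_add_smul_sub e x (Int.le_ceil t)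

theorem exists_int_minorant_forall_neg_eq (hq : IsSublinear q) (hqL : ∀ x ∈ L, ∃ k : ℤ, q x = k)
    {ι : Type*} (b : ι → V) (hb : ∀ i, b i ∈ L) (s : Finset ι) :
    ∃ p : V → ℝ, IsSublinear p ∧ (∀ x ∈ L, ∃ k : ℤ, p x = k) ∧ (∀ x, p x ≤ q x) ∧
      ∀ i ∈ s, p (-b i) = -p (b i) := by
  induction s using Finset.cons_induction with
  | empty => exact ⟨q, hq, hqL, fun _ => le_rfl, by simp⟩
  | cons i s _ ih =>
    obtain ⟨p, hp, hpL, hpq, hps⟩ := ih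
    refine ⟨truncAlong p (b i), hp.isSublinear_truncAlong, hp.truncAlong_int hpL (hb i),
      fun x => (hp.truncAlong_le x).trans (hpq x), ?_⟩
    rw [Finset.forall_mem_cons]
    obtain ⟨h₁, h₂⟩ := hp.truncAlong_self (e := b i)
    refine ⟨by rw [h₁, h₂], fun j hj => ?_⟩
    obtain ⟨h₁, h₂⟩ := hp.isSublinear_truncAlong.eq_of_le_of_neg_eq hp.truncAlong_le (hps j hj)
    rw [h₁, h₂]

theorem exists_int_linearMap_le_eq (hq : IsSublinear q) (hqL : ∀ x ∈ L, ∃ k : ℤ, q x = k)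
    {ι : Type*} [Fintype ι] (b : Module.Basis ι ℝ V) (hb : ∀ i, b i ∈ L) {m : V} (hm : m ∈ L) :
    ∃ f : V →ₗ[ℝ] ℝ, (∀ x ∈ L, ∃ k : ℤ, f x = k) ∧ (∀ x, f x ≤ q x) ∧ f m = q m := by
  obtain ⟨p, hp, hpL, hpq, hpb⟩ := hq.isSublinear_truncAlong.exists_int_minorant_forall_neg_eq
    (hq.truncAlong_int hqL hm) b hb Finset.univ
  have hneg : ∀ v, p (-v) = -p v := fun v =>
    hp.neg_eq_of_mem_span (s := Set.range b) (by simpa using hpb) (b.span_eq ▸ Submodule.mem_top)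
  obtain ⟨f, rfl⟩ := hp.exists_linearMap_eq hneg
  obtain ⟨hm₁, hm₂⟩ := hq.truncAlong_self (e := m)
  refine ⟨f, hpL, fun x => (hpq x).trans (hq.truncAlong_le x), le_antisymm ?_ ?_⟩
  · exact hm₁ ▸ hpq m
  · have := hpq (-m)
    rw [hm₂, map_neg] at this
    linarith

end IsSublinear

open RealInnerProductSpace

section EuclideanSpace

variable {ι : Type*}

variable (ι) in
def intLattice : AddSubgroup (EuclideanSpace ℝ ι) where
  carrier := {x | ∀ i, ∃ m : ℤ, x i = m}
  add_mem' hx hy i := by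
    obtain ⟨a, ha⟩ := hx i
    obtain ⟨b, hb⟩ := hy i
    exact ⟨a + b, by simp [ha, hb]⟩
  zero_mem' _ := ⟨0, by simp⟩
  neg_mem' hx i := by
    obtain ⟨a, ha⟩ := hx i
    exact ⟨-a, by simp [ha]⟩

theorem single_mem_intLattice [DecidableEq ι] (i : ι) :
    EuclideanSpace.single i (1 : ℝ) ∈ intLattice ι := fun j => by
  by_cases h : j = i
  · exact ⟨1, by simp [h]⟩
  · exact ⟨0, by simp [h]⟩

theorem exists_mem_intLattice_inner_le_and_eq [Fintype ι] {N : EuclideanSpace ℝ ι → ℝ}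
    (hN : IsSublinear N) (hNL : ∀ x ∈ intLattice ι, ∃ k : ℤ, N x = k) {m : EuclideanSpace ℝ ι}
    (hm : m ∈ intLattice ι) :
    ∃ y ∈ intLattice ι, (∀ x, ⟪x, y⟫ ≤ N x) ∧ ⟪m, y⟫ = N m := by
  classical
  obtain ⟨f, hfL, hfN, hfm⟩ := hN.exists_int_linearMap_le_eq hNL
    (EuclideanSpace.basisFun ι ℝ).toBasis (fun i => by simpa using single_mem_intLattice i) hm
  set y := (InnerProductSpace.toDual ℝ _).symm (LinearMap.toContinuousLinearMap f)
  have hy : ∀ x, ⟪x, y⟫ = f x := fun x => by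
    rw [real_inner_comm, InnerProductSpace.toDual_symm_apply]
    rfl
  refine ⟨y, fun i => ?_, fun x => (hy x).trans_le (hfN x), (hy m).trans hfm⟩
  obtain ⟨k, hk⟩ := hfL _ (single_mem_intLattice i)
  refine ⟨k, ?_⟩
  rw [← hk, ← hy, EuclideanSpace.inner_single_left]
  simp

theorem finite_setOf_mem_intLattice_inner_le [Fintype ι] (N : EuclideanSpace ℝ ι → ℝ) :
    {y | y ∈ intLattice ι ∧ ∀ x, ⟪x, y⟫ ≤ N x}.Finite := by
  classical
  let e : ι → EuclideanSpace ℝ ι := fun i => EuclideanSpace.single i 1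
  refine ((Set.finite_Icc (fun i => ⌊-N (-e i)⌋) (fun i => ⌈N (e i)⌉)).image
    fun z : ι → ℤ => WithLp.toLp 2 fun i => (z i : ℝ)).subset ?_
  rintro y ⟨hy, hyN⟩
  choose z hz using hy
  have hcoord : ∀ i, ⟪e i, y⟫ = z i := fun i => by
    simp [e, EuclideanSpace.inner_single_left, hz]
  refine ⟨z, ⟨fun i => Int.floor_le_iff.2 ?_, fun i => Int.le_ceil_iff.2 ?_⟩, ?_⟩
  · have := hyN (-e i)
    rw [inner_neg_left, hcoord] at this
    linarith
  · have := hyN (e i)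
    rw [hcoord] at this
    linarith
  · ext i
    simp [hz]

theorem dense_setOf_nat_smul_mem_intLattice [Fintype ι] :
    Dense {x : EuclideanSpace ℝ ι | ∃ n : ℕ, 0 < n ∧ (n : ℝ) • x ∈ intLattice ι} := by
  have hrat : DenseRange fun r : ι → ℚ => WithLp.toLp 2 fun i => (r i : ℝ) :=
    (WithLp.toLp_surjective 2).denseRange.comp (DenseRange.piMap fun _ => Rat.denseRange_cast)
      (PiLp.continuous_toLp 2 _)
  refine hrat.mono ?_
  rintro _ ⟨r, rfl⟩
  refine ⟨∏ j, (r j).den, by positivity, fun i => ?_⟩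
  obtain ⟨c, hc⟩ := Finset.dvd_prod_of_mem (fun j => (r j).den) (Finset.mem_univ i)
  refine ⟨c * (r i).num, ?_⟩
  have : ((∏ j, (r j).den : ℕ) : ℚ) * r i = c * (r i).num := by
    rw [hc, ← Rat.den_mul_eq_num]
    push_cast
    ring
  simpa using congrArg ((↑) : ℚ → ℝ) this

theorem exists_mem_intLattice_inner_le_and_ge [Fintype ι] {N : EuclideanSpace ℝ ι → ℝ}
    (hN : IsSublinear N) (hNc : Continuous N) (hNL : ∀ x ∈ intLattice ι, ∃ k : ℤ, N x = k)
    (x : EuclideanSpace ℝ ι) :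
    ∃ y ∈ intLattice ι, (∀ z, ⟪z, y⟫ ≤ N z) ∧ N x ≤ ⟪x, y⟫ := by
  set S := {y | y ∈ intLattice ι ∧ ∀ z, ⟪z, y⟫ ≤ N z}
  have hclosed : IsClosed (⋃ y ∈ S, {x | N x ≤ ⟪x, y⟫}) :=
    (finite_setOf_mem_intLattice_inner_le N).isClosed_biUnion
      fun y _ => isClosed_le hNc (continuous_id.inner continuous_const)
  have hsub : {x | ∃ n : ℕ, 0 < n ∧ (n : ℝ) • x ∈ intLattice ι} ⊆
      ⋃ y ∈ S, {x | N x ≤ ⟪x, y⟫} := by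
    rintro x ⟨n, hn, hx⟩
    obtain ⟨y, hy, hyN, hxy⟩ := exists_mem_intLattice_inner_le_and_eq hN hNL hx
    rw [hN.smul_eq _ (by positivity), real_inner_smul_left] at hxy
    exact Set.mem_iUnion₂.2 ⟨y, ⟨hy, hyN⟩, (mul_left_cancel₀ (by positivity) hxy).ge⟩
  obtain ⟨y, ⟨hy, hyN⟩, hxy⟩ := Set.mem_iUnion₂.1 <| hclosed.closure_subset_iff.2 hsub
    ((dense_setOf_nat_smul_mem_intLattice (ι := ι)).closure_eq ▸ Set.mem_univ x)
  exact ⟨y, hy, hyN, hxy⟩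

end EuclideanSpace

theorem unit_ball_of_integer_seminorm_is_integer_polyhedron_general
    (d : ℕ) (N : EuclideanSpace ℝ (Fin d) → ℝ)
    (hhom : ∀ (c : ℝ) (x : EuclideanSpace ℝ (Fin d)), N (c • x) = |c| * N x)
    (hadd : ∀ x y : EuclideanSpace ℝ (Fin d), N (x + y) ≤ N x + N y)
    (hint : ∀ x : EuclideanSpace ℝ (Fin d),
      (∀ i, ∃ m : ℤ, x i = (m : ℝ)) → ∃ m : ℤ, N x = (m : ℝ)) :
    ∃ F : Finset (EuclideanSpace ℝ (Fin d)),
      (∀ y ∈ F, ∀ i, ∃ m : ℤ, y i = (m : ℝ)) ∧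
      {x : EuclideanSpace ℝ (Fin d) | N x ≤ 1} =
        {x : EuclideanSpace ℝ (Fin d) | ∀ y ∈ F, ⟪x, y⟫ ≤ 1} := by
  have hN : IsSublinear N := ⟨hadd, fun c hc x => by rw [hhom, abs_of_pos hc]⟩
  have hNc : Continuous N := continuousOn_univ.1 <|
    (Seminorm.of N hadd hhom).convexOn.continuousOn isOpen_univ
  have hfin := finite_setOf_mem_intLattice_inner_le N
  refine ⟨hfin.toFinset, fun y hy => (hfin.mem_toFinset.1 hy).1, Set.ext fun x => ⟨?_, ?_⟩⟩
  · intro hx y hy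
    exact ((hfin.mem_toFinset.1 hy).2 x).trans hx
  · intro hx
    obtain ⟨y, hy, hyN, hxy⟩ := exists_mem_intLattice_inner_le_and_ge hN hNc hint x
    exact hxy.trans (hx y (hfin.mem_toFinset.2 ⟨hy, hyN⟩))

/-- The unit ball of a seminorm on `ℝ^d` taking integer values on `ℤ^d` is a
polyhedron defined by finitely many integer inequalities. -/
theorem unit_ball_of_integer_seminorm_is_integer_polyhedron
    (d : ℕ) (hd : 1 ≤ d) (N : EuclideanSpace ℝ (Fin d) → ℝ)
    (hhom : ∀ (c : ℝ) (x : EuclideanSpace ℝ (Fin d)), N (c • x) = |c| * N x)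
    (hadd : ∀ x y : EuclideanSpace ℝ (Fin d), N (x + y) ≤ N x + N y)
    (hint : ∀ x : EuclideanSpace ℝ (Fin d),
      (∀ i, ∃ m : ℤ, x i = (m : ℝ)) → ∃ m : ℤ, N x = (m : ℝ)) :
    ∃ F : Finset (EuclideanSpace ℝ (Fin d)),
      (∀ y ∈ F, ∀ i, ∃ m : ℤ, y i = (m : ℝ)) ∧
      {x : EuclideanSpace ℝ (Fin d) | N x ≤ 1} =
        {x : EuclideanSpace ℝ (Fin d) | ∀ y ∈ F, ⟪x, y⟫ ≤ 1} :=
  unit_ball_of_integer_seminorm_is_integer_polyhedron_general d N hhom hadd hint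
end

section
/- Let d ≥ 1 and let N : ℝ^d → ℝ be a seminorm taking integer values on ℤ^d, and let B* = {y ∈ ℝ^d : ⟨x, y⟩ ≤ N(x) for all x ∈ ℝ^d} be the dual unit ball. Then every exposed point y₀ of B* lies in ℤ^d, i.e., all coordinates of y₀ are integers. -/
/-!
Let `x₀` expose `y₀` and let `zₙ` be the lattice point nearest to `n • x₀`. By Hahn–Banach, `N` has
a supporting functional at `zₙ` in the compact set `B*`; as `zₙ / n → x₀`, every limit of these
functionals maximizes `⟪x₀, ·⟫` on `B*`, hence is `y₀`, and the same holds at `zₙ + eᵢ`. The two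
supporting functionals squeeze the integer `N (zₙ + eᵢ) - N zₙ` between quantities tending to
`y₀ i`, so `y₀ i` is a limit of integers.
-/

open RealInnerProductSpace Filter Topology

variable {E : Type*} [NormedAddCommGroup E] [InnerProductSpace ℝ E]

theorem IsCompact.tendsto_of_exposed_of_inner_le {α : Type*} {l : Filter α} {K : Set E}
    (hK : IsCompact K) {x₀ y₀ : E} (hexp : ∀ y ∈ K, y ≠ y₀ → ⟪x₀, y⟫ < ⟪x₀, y₀⟫)
    {u v : α → E} (hu : ∀ a, u a ∈ K) (hv : Tendsto v l (𝓝 x₀))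
    (hle : ∀ a, ⟪v a, y₀⟫ ≤ ⟪v a, u a⟫) : Tendsto u l (𝓝 y₀) := by
  refine hK.tendsto_nhds_of_unique_mapClusterPt (Eventually.of_forall hu) fun y hy hcl => ?_
  obtain ⟨U, hUl, hUy⟩ := mapClusterPt_iff_ultrafilter.mp hcl
  have hvU : Tendsto v U (𝓝 x₀) := hv.mono_left hUl
  have : ⟪x₀, y₀⟫ ≤ ⟪x₀, y⟫ :=
    le_of_tendsto_of_tendsto' (hvU.inner tendsto_const_nhds) (hvU.inner hUy) hle
  by_contra hne
  exact (hexp y hy hne).not_ge this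

namespace Seminorm

variable (p : Seminorm ℝ E)

def dualBall : Set E := {y | ∀ x, ⟪x, y⟫ ≤ p x}

theorem isClosed_dualBall : IsClosed p.dualBall := by
  simp only [dualBall, Set.ofPred_forall]
  exact isClosed_iInter fun x => isClosed_le (continuous_const.inner continuous_id) continuous_const

theorem dualBall_subset_closedBall {C : ℝ} (hC0 : 0 ≤ C) (hC : ∀ x, p x ≤ C * ‖x‖) :
    p.dualBall ⊆ Metric.closedBall 0 C := by
  intro y hy
  rw [mem_closedBall_zero_iff]
  rcases (norm_nonneg y).eq_or_lt with hy0 | hy0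
  · rwa [← hy0]
  · refine le_of_mul_le_mul_right ?_ hy0
    calc ‖y‖ * ‖y‖ = ⟪y, y⟫ := (real_inner_self_eq_norm_mul_norm y).symm
      _ ≤ p y := hy y
      _ ≤ C * ‖y‖ := hC y

theorem continuous_of_finiteDimensional [FiniteDimensional ℝ E] : Continuous p :=
  continuousOn_univ.mp (p.convexOn.continuousOn isOpen_univ)

theorem isCompact_dualBall [FiniteDimensional ℝ E] : IsCompact p.dualBall := by
  obtain ⟨C, hC0, hC⟩ := bound_of_continuous_normedSpace p p.continuous_of_finiteDimensional
  exact (isCompact_closedBall 0 C).of_isClosed_subset p.isClosed_dualBall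
    (p.dualBall_subset_closedBall hC0.le hC)

theorem exists_mem_dualBall_inner_eq [FiniteDimensional ℝ E] (x : E) :
    ∃ y ∈ p.dualBall, ⟪x, y⟫ = p x := by
  rcases eq_or_ne x 0 with rfl | hx
  · exact ⟨0, fun z => by simp, by simp⟩
  let f := (LinearPMap.mkSpanSingleton x (p x) hx : E →ₗ.[ℝ] ℝ)
  have hfp : ∀ z : f.domain, f z ≤ p z := by
    rintro ⟨z, hz⟩
    obtain ⟨c, rfl⟩ := Submodule.mem_span_singleton.mp hz
    rw [LinearPMap.mkSpanSingleton'_apply, map_smul_eq_mul, smul_eq_mul, Real.norm_eq_abs]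
    exact mul_le_mul_of_nonneg_right (le_abs_self c) (apply_nonneg p x)
  obtain ⟨g, hgf, hgp⟩ := Module.Dual.exists_extension_of_le_seminorm_real _ f.toFun hfp
  let y := (InnerProductSpace.toDual ℝ E).symm (LinearMap.toContinuousLinearMap g)
  have hy : ∀ z, ⟪z, y⟫ = g z := fun z => by
    rw [real_inner_comm]; exact InnerProductSpace.toDual_symm_apply
  refine ⟨y, fun z => (hy z).trans_le ((le_abs_self _).trans (hgp z)), ?_⟩
  rw [hy, hgf ⟨x, Submodule.mem_span_singleton_self x⟩]
  exact LinearPMap.mkSpanSingleton_apply ..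

theorem tendsto_sub_of_exposed [FiniteDimensional ℝ E] {x₀ y₀ : E} (hy₀ : y₀ ∈ p.dualBall)
    (hexp : ∀ y ∈ p.dualBall, y ≠ y₀ → ⟪x₀, y⟫ < ⟪x₀, y₀⟫) {α : Type*} {l : Filter α}
    {c : α → ℝ} {z : α → E} (hc0 : ∀ a, 0 ≤ c a) (hc : Tendsto c l (𝓝 0))
    (hz : Tendsto (fun a => c a • z a) l (𝓝 x₀)) (e : E) :
    Tendsto (fun a => p (z a + e) - p (z a)) l (𝓝 ⟪e, y₀⟫) := by
  have supporting : ∀ w : α → E, Tendsto (fun a => c a • w a) l (𝓝 x₀) →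
      ∃ g : α → E, (∀ a, g a ∈ p.dualBall) ∧ (∀ a, ⟪w a, g a⟫ = p (w a)) ∧
        Tendsto (fun a => ⟪e, g a⟫) l (𝓝 ⟪e, y₀⟫) := by
    intro w hw
    choose g hgB hgw using fun a => p.exists_mem_dualBall_inner_eq (w a)
    refine ⟨g, hgB, hgw, tendsto_const_nhds.inner ?_⟩
    refine p.isCompact_dualBall.tendsto_of_exposed_of_inner_le hexp hgB hw fun a => ?_
    rw [real_inner_smul_left, real_inner_smul_left, hgw]
    exact mul_le_mul_of_nonneg_left (hy₀ _) (hc0 a)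
  obtain ⟨g, hgB, hg, hgy⟩ := supporting z hz
  obtain ⟨h, hhB, hh, hhy⟩ := supporting (fun a => z a + e) <| by
    simpa only [smul_add, zero_smul, add_zero] using hz.add (hc.smul_const e)
  refine tendsto_of_tendsto_of_tendsto_of_le_of_le hgy hhy (fun a => ?_) (fun a => ?_)
  · have h_le := hgB a (z a + e)
    rw [inner_add_left, hg] at h_le
    linarith
  · have h_le := hhB a (z a)
    have h_eq := hh a
    rw [inner_add_left] at h_eq
    linarith

end Seminorm

theorem tendsto_round_mul_div (a : ℝ) :
    Tendsto (fun n : ℕ => (round (n * a) : ℝ) / n) atTop (𝓝 a) := by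
  rw [tendsto_iff_norm_sub_tendsto_zero]
  refine squeeze_zero_norm' ?_ tendsto_one_div_atTop_nhds_zero_nat
  filter_upwards [eventually_ne_atTop 0] with n hn
  have hn' : (0 : ℝ) < n := by positivity
  rw [norm_norm, Real.norm_eq_abs, div_sub' hn'.ne', abs_div, Nat.abs_cast]
  gcongr
  rw [abs_sub_comm]
  linarith [abs_sub_round ((n : ℝ) * a)]

theorem EuclideanSpace.tendsto_inv_smul_round {ι : Type*} [Fintype ι] (x : EuclideanSpace ℝ ι) :
    Tendsto (fun n : ℕ => (n : ℝ)⁻¹ • WithLp.toLp 2 (fun i => (round (n * x i) : ℝ)))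
      atTop (𝓝 x) := by
  have := ((PiLp.continuous_toLp 2 _).tendsto _).comp
    (tendsto_pi_nhds.mpr fun i => tendsto_round_mul_div (x i))
  rw [WithLp.toLp_ofLp] at this
  refine this.congr fun n => ?_
  ext j
  simp [div_eq_inv_mul]

theorem exposed_points_of_dual_ball_are_integral_general
    (d : ℕ) (N : EuclideanSpace ℝ (Fin d) → ℝ)
    (hhom : ∀ (c : ℝ) (x : EuclideanSpace ℝ (Fin d)), N (c • x) = |c| * N x)
    (hadd : ∀ x y : EuclideanSpace ℝ (Fin d), N (x + y) ≤ N x + N y)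
    (hint : ∀ x : EuclideanSpace ℝ (Fin d),
      (∀ i, ∃ m : ℤ, x i = (m : ℝ)) → ∃ m : ℤ, N x = (m : ℝ))
    (Bstar : Set (EuclideanSpace ℝ (Fin d)))
    (hBstar : Bstar = {y : EuclideanSpace ℝ (Fin d) |
      ∀ x : EuclideanSpace ℝ (Fin d), ⟪x, y⟫ ≤ N x})
    (y₀ : EuclideanSpace ℝ (Fin d)) (hy₀ : y₀ ∈ Bstar)
    (hexp : ∃ x₀ : EuclideanSpace ℝ (Fin d),
      ∀ y ∈ Bstar, y ≠ y₀ → ⟪x₀, y⟫ < ⟪x₀, y₀⟫) :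
    ∀ i, ∃ m : ℤ, y₀ i = (m : ℝ) := by
  intro i
  let p : Seminorm ℝ (EuclideanSpace ℝ (Fin d)) :=
    Seminorm.of N hadd fun c x => by rw [hhom, Real.norm_eq_abs]
  obtain rfl : Bstar = p.dualBall := hBstar
  obtain ⟨x₀, hx₀⟩ := hexp
  let z (n : ℕ) : EuclideanSpace ℝ (Fin d) := WithLp.toLp 2 fun j => (round (n * x₀ j) : ℝ)
  let e : EuclideanSpace ℝ (Fin d) := EuclideanSpace.single i 1
  have hlim := p.tendsto_sub_of_exposed hy₀ hx₀ (fun n => inv_nonneg.mpr n.cast_nonneg)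
    tendsto_inv_atTop_nhds_zero_nat (EuclideanSpace.tendsto_inv_smul_round x₀) e
  have hz_int (n : ℕ) : ∃ m : ℤ, p (z n) = m :=
    hint _ fun j => ⟨round (n * x₀ j), rfl⟩
  have hze_int (n : ℕ) : ∃ m : ℤ, p (z n + e) = m :=
    hint _ fun j => ⟨round (n * x₀ j) + if j = i then 1 else 0, by simp [z, e]⟩
  have hdiff_int (n : ℕ) : p (z n + e) - p (z n) ∈ Set.range ((↑) : ℤ → ℝ) := by
    obtain ⟨a, ha⟩ := hze_int n
    obtain ⟨b, hb⟩ := hz_int n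
    exact ⟨a - b, by rw [ha, hb, Int.cast_sub]⟩
  have := Real.isClosed_range_intCast.mem_of_tendsto hlim (Eventually.of_forall hdiff_int)
  simpa [e, EuclideanSpace.inner_single_left, eq_comm] using this

/-- Every exposed point of the dual unit ball of a seminorm on `ℝ^d` taking integer
values on `ℤ^d` has integer coordinates. -/
theorem exposed_points_of_dual_ball_are_integral
    (d : ℕ) (hd : 1 ≤ d) (N : EuclideanSpace ℝ (Fin d) → ℝ)
    (hhom : ∀ (c : ℝ) (x : EuclideanSpace ℝ (Fin d)), N (c • x) = |c| * N x)
    (hadd : ∀ x y : EuclideanSpace ℝ (Fin d), N (x + y) ≤ N x + N y)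
    (hint : ∀ x : EuclideanSpace ℝ (Fin d),
      (∀ i, ∃ m : ℤ, x i = (m : ℝ)) → ∃ m : ℤ, N x = (m : ℝ))
    (Bstar : Set (EuclideanSpace ℝ (Fin d)))
    (hBstar : Bstar = {y : EuclideanSpace ℝ (Fin d) |
      ∀ x : EuclideanSpace ℝ (Fin d), ⟪x, y⟫ ≤ N x})
    (y₀ : EuclideanSpace ℝ (Fin d)) (hy₀ : y₀ ∈ Bstar)
    (hexp : ∃ x₀ : EuclideanSpace ℝ (Fin d),
      ∀ y ∈ Bstar, y ≠ y₀ → ⟪x₀, y⟫ < ⟪x₀, y₀⟫) :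
    ∀ i, ∃ m : ℤ, y₀ i = (m : ℝ) :=
  exposed_points_of_dual_ball_are_integral_general d N hhom hadd hint Bstar hBstar y₀ hy₀ hexp
end
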